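/- arXiv:1410.0839 — 3 statements merged into one kernel-verified Lean document; each statement's English description precedes it below -/
import Mathlib

section
/- In the discrete torus (ℤ/4ℤ)^n, every cube packing with 2^n - 2 cubes is extensible: there exists a cube disjoint from all cubes of the packing. -/
/-- The cube `v + {0,1}^n` in the discrete torus `(ℤ/4ℤ)^n`. -/
def cube {n : ℕ} (v : Fin n → ZMod 4) : Set (Fin n → ZMod 4) :=
  {x | ∀ i, x i = v i ∨ x i = v i + 1}

/-!
Call the points covered by no cube of `P` its holes, and let `k = 2 ^ n - #P`. By induction on
`n` we show that for `k = 1, 2` the holes contain a cube (the case `k = 1` feeds the induction for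
`k = 2`). Slice the torus into the four layers `x p = a`: the cubes meeting a layer form a packing
of `(ℤ/4ℤ)^(n-1)` missing `k_a` cubes, and `∑ k_a = 2 k`. A hole at height `a` with no hole at
height `a + 1` has one at height `a - 1`. Hence if some layer has no holes, the last nonempty layer
of holes before it lies in the layer below, and misses between `1` and `k` cubes; induction gives a
cube inside it, whose product with an edge is a cube of holes. Otherwise every layer misses exactly
one cube, so its holes form a cube `u a`. If two consecutive `u a` coincide we are done; if not,
counting intersections shows that all `u a` agree outside one coordinate, so the holes avoid some
layer in another direction and the first case applies there.
-/

open Finset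

namespace ZMod

theorem forall_of_imp_add_one {m : ℕ} [NeZero m] {Q : ZMod m → Prop}
    (h : ∀ a, Q a → Q (a + 1)) {a : ZMod m} (ha : Q a) (b : ZMod m) : Q b := by
  have key : ∀ j : ℕ, Q (a + j) := by
    intro j
    induction j with
    | zero => simpa using ha
    | succ j ih => simpa [add_assoc] using h _ ih
  simpa using key (b - a).val

theorem exists_and_not_add_one {m : ℕ} [NeZero m] {Q : ZMod m → Prop} (h₁ : ∃ a, Q a)
    (h₂ : ∃ b, ¬Q b) : ∃ a, Q a ∧ ¬Q (a + 1) := by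
  by_contra! h
  obtain ⟨a, ha⟩ := h₁
  obtain ⟨b, hb⟩ := h₂
  exact hb (forall_of_imp_add_one h ha b)

theorem apply_eq_of_forall_add_one {m : ℕ} [NeZero m] {α : Type*} {f : ZMod m → α}
    (h : ∀ a, f (a + 1) = f a) (a b : ZMod m) : f a = f b :=
  forall_of_imp_add_one (Q := fun c => f c = f b) (fun c hc => (h c).trans hc) rfl a

end ZMod

def edge (a : ZMod 4) : Finset (ZMod 4) := {a, a + 1}

theorem mem_edge {a c : ZMod 4} : a ∈ edge c ↔ a = c ∨ a = c + 1 := by simp [edge]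

section Cubes

variable {n : ℕ}

def cubeFinset (v : Fin n → ZMod 4) : Finset (Fin n → ZMod 4) :=
  Fintype.piFinset fun i => edge (v i)

@[simp]
theorem mem_cubeFinset {v x : Fin n → ZMod 4} : x ∈ cubeFinset v ↔ x ∈ cube v := by
  simp [cubeFinset, cube, mem_edge]

@[simp]
theorem coe_cubeFinset (v : Fin n → ZMod 4) : (cubeFinset v : Set (Fin n → ZMod 4)) = cube v :=
  Set.ext fun _ => mem_cubeFinset

theorem mem_cube_iff {v x : Fin n → ZMod 4} : x ∈ cube v ↔ ∀ i, x i ∈ edge (v i) := by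
  simp [cube, mem_edge]

theorem self_mem_cube (v : Fin n → ZMod 4) : v ∈ cube v := fun _ => Or.inl rfl

theorem card_cubeFinset (v : Fin n → ZMod 4) : #(cubeFinset v) = 2 ^ n := by
  have h : ∀ a : ZMod 4, #(edge a) = 2 := by decide
  simp [cubeFinset, h]

theorem cubeFinset_inter (u w : Fin n → ZMod 4) :
    cubeFinset u ∩ cubeFinset w = Fintype.piFinset fun i => edge (u i) ∩ edge (w i) :=
  (Fintype.piFinset_inter _ _).symm

theorem disjoint_cubeFinset_iff {u w : Fin n → ZMod 4} :
    Disjoint (cubeFinset u) (cubeFinset w) ↔ ∃ i, w i = u i + 2 := by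
  have h : ∀ a b : ZMod 4, (edge a ∩ edge b).Nonempty ↔ b ≠ a + 2 := by decide
  rw [disjoint_iff_inter_eq_empty, ← not_nonempty_iff_eq_empty, cubeFinset_inter,
    Fintype.piFinset_nonempty]
  simp [h]

theorem card_cubeFinset_inter_mul_le (u w : Fin n → ZMod 4) :
    #(cubeFinset u ∩ cubeFinset w) * 2 ^ #{i | u i ≠ w i} ≤ 2 ^ n := by
  have h : ∀ a b : ZMod 4, #(edge a ∩ edge b) * (if a ≠ b then 2 else 1) ≤ 2 := by decide
  rw [cubeFinset_inter, Fintype.card_piFinset, ← prod_const, prod_filter, ← prod_mul_distrib]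
  calc _ ≤ ∏ _ : Fin n, 2 := prod_le_prod' fun i _ => h (u i) (w i)
    _ = 2 ^ n := by simp

theorem card_cubeFinset_inter_mul_two_le {u w : Fin n → ZMod 4} (h : u ≠ w) :
    #(cubeFinset u ∩ cubeFinset w) * 2 ≤ 2 ^ n := by
  obtain ⟨i, hi⟩ := Function.ne_iff.1 h
  have hs : 1 ≤ #{i | u i ≠ w i} := card_pos.2 ⟨i, by simpa using hi⟩
  calc _ ≤ #(cubeFinset u ∩ cubeFinset w) * 2 ^ #{i | u i ≠ w i} := by
        gcongr
        exact Nat.le_self_pow (by omega) 2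
    _ ≤ 2 ^ n := card_cubeFinset_inter_mul_le u w

theorem exists_forall_ne_eq_of_two_pow_le_card_inter {u w : Fin n → ZMod 4} (h : u ≠ w)
    (hcard : 2 ^ n ≤ #(cubeFinset u ∩ cubeFinset w) * 2) : ∃ i, ∀ k ≠ i, w k = u k := by
  obtain ⟨i, hi⟩ := Function.ne_iff.1 h
  refine ⟨i, fun k hk => ?_⟩
  by_contra hne
  have hs : 2 ≤ #{i | u i ≠ w i} :=
    one_lt_card.2 ⟨k, by simpa [eq_comm] using hne, i, by simpa using hi, hk⟩
  have := Nat.two_pow_pos n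
  have := (card_cubeFinset_inter_mul_le u w).trans hcard
  have : 2 ^ 2 ≤ 2 ^ #{i | u i ≠ w i} := Nat.pow_le_pow_right two_pos hs
  nlinarith

end Cubes

section Packing

variable {n : ℕ}

def IsCubePacking (P : Finset (Fin n → ZMod 4)) : Prop :=
  (P : Set (Fin n → ZMod 4)).Pairwise fun v w => Disjoint (cube v) (cube w)

theorem IsCubePacking.eq_of_mem_cube {P : Finset (Fin n → ZMod 4)} (hP : IsCubePacking P)
    {v w x : Fin n → ZMod 4} (hv : v ∈ P) (hw : w ∈ P) (hxv : x ∈ cube v)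
    (hxw : x ∈ cube w) : v = w :=
  by_contra fun hne => Set.disjoint_left.1 (hP hv hw hne) hxv hxw

def holes (P : Finset (Fin n → ZMod 4)) : Finset (Fin n → ZMod 4) :=
  univ \ P.biUnion cubeFinset

theorem mem_holes {P : Finset (Fin n → ZMod 4)} {x : Fin n → ZMod 4} :
    x ∈ holes P ↔ ∀ v ∈ P, x ∉ cube v := by
  simp [holes]

theorem IsCubePacking.card_holes_add {P : Finset (Fin n → ZMod 4)} (hP : IsCubePacking P) :
    #(holes P) + #P * 2 ^ n = 2 ^ n * 2 ^ n := by
  have hdisj : (P : Set (Fin n → ZMod 4)).PairwiseDisjoint cubeFinset := fun v hv w hw hne => by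
    rw [Function.onFun, ← disjoint_coe, coe_cubeFinset, coe_cubeFinset]
    exact hP hv hw hne
  have hcover : #(P.biUnion cubeFinset) = #P * 2 ^ n := by
    simp [card_biUnion hdisj, card_cubeFinset]
  rw [holes, ← hcover, card_sdiff_add_card_eq_card (subset_univ _), card_univ]
  simp [← mul_pow]

theorem IsCubePacking.card_le {P : Finset (Fin n → ZMod 4)} (hP : IsCubePacking P) :
    #P ≤ 2 ^ n :=
  Nat.le_of_mul_le_mul_right (by have := hP.card_holes_add; omega) (Nat.two_pow_pos n)

theorem IsCubePacking.card_holes {P : Finset (Fin n → ZMod 4)} (hP : IsCubePacking P) :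
    #(holes P) = (2 ^ n - #P) * 2 ^ n := by
  rw [Nat.sub_mul]
  have := hP.card_holes_add
  omega

end Packing

def HolesContainCube (n : ℕ) : Prop :=
  ∀ (P : Finset (Fin n → ZMod 4)) (k : ℕ), IsCubePacking P → #P + k = 2 ^ n → 1 ≤ k →
    k ≤ 2 → ∃ w, cubeFinset w ⊆ holes P

theorem Finset.card_inter_mul_two_eq_of_subset_union {α : Type*} [DecidableEq α]
    {s t r : Finset α} (h : s ⊆ t ∪ r) (ht : #(s ∩ t) * 2 ≤ #s)
    (hr : #(s ∩ r) * 2 ≤ #s) : #(s ∩ t) * 2 = #s ∧ s ∩ t ∩ r = ∅ := by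
  have hunion : s ∩ t ∪ s ∩ r = s := by rw [← inter_union_distrib_left, inter_eq_left.2 h]
  have hinter : s ∩ t ∩ (s ∩ r) = s ∩ t ∩ r := by
    ext; simp only [mem_inter]; tauto
  have := card_union_add_card_inter (s ∩ t) (s ∩ r)
  rw [hunion, hinter] at this
  exact ⟨by omega, card_eq_zero.1 (by omega)⟩

section Layers

variable {n : ℕ}

theorem insertNth_mem_cube_iff {p : Fin (n + 1)} {a : ZMod 4} {y : Fin n → ZMod 4}
    {v : Fin (n + 1) → ZMod 4} :
    p.insertNth a y ∈ cube v ↔ a ∈ edge (v p) ∧ y ∈ cube (p.removeNth v) := by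
  simp [mem_cube_iff, Fin.forall_iff_succAbove p, Fin.removeNth]

variable (P : Finset (Fin (n + 1) → ZMod 4)) (p : Fin (n + 1)) (a : ZMod 4)

def layer : Finset (Fin n → ZMod 4) :=
  {v ∈ P | a ∈ edge (v p)}.image p.removeNth

def layerHoles : Finset (Fin n → ZMod 4) :=
  {y | p.insertNth a y ∈ holes P}

variable {P p a}

theorem mem_layerHoles {y : Fin n → ZMod 4} :
    y ∈ layerHoles P p a ↔ p.insertNth a y ∈ holes P := by
  simp [layerHoles]

theorem removeNth_mem_layerHoles_iff {x : Fin (n + 1) → ZMod 4} :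
    p.removeNth x ∈ layerHoles P p (x p) ↔ x ∈ holes P := by
  rw [mem_layerHoles, Fin.insertNth_self_removeNth]

theorem layerHoles_eq_holes_layer : layerHoles P p a = holes (layer P p a) := by
  ext y
  simp only [layerHoles, layer, mem_filter, mem_univ, true_and, mem_holes, mem_image,
    insertNth_mem_cube_iff]
  grind

theorem isCubePacking_layer (hP : IsCubePacking P) : IsCubePacking (layer P p a) := by
  rintro _ hu _ hw hne
  simp only [layer, mem_coe, mem_image, mem_filter] at hu hw
  obtain ⟨v, ⟨hv, hav⟩, rfl⟩ := hu
  obtain ⟨w, ⟨hw, haw⟩, rfl⟩ := hw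
  refine Set.disjoint_left.2 fun y hyv hyw => hne ?_
  rw [hP.eq_of_mem_cube hv hw (insertNth_mem_cube_iff.2 ⟨hav, hyv⟩)
    (insertNth_mem_cube_iff.2 ⟨haw, hyw⟩)]

theorem IsCubePacking.card_layer (hP : IsCubePacking P) :
    #(layer P p a) = #{v ∈ P | a ∈ edge (v p)} := by
  refine card_image_of_injOn fun v hv w hw hvw => ?_
  simp only [coe_filter, Set.mem_ofPred_eq] at hv hw
  exact hP.eq_of_mem_cube hv.1 hw.1 (insertNth_mem_cube_iff.2 ⟨hv.2, self_mem_cube _⟩)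
    (insertNth_mem_cube_iff.2 ⟨hw.2, hvw ▸ self_mem_cube _⟩)

theorem IsCubePacking.sum_card_layer (hP : IsCubePacking P) :
    ∑ a, #(layer P p a) = 2 * #P := by
  have hedge : ∀ c : ZMod 4, ∑ a, (if a ∈ edge c then 1 else 0) = 2 := by decide
  calc ∑ a, #(layer P p a) = ∑ a, ∑ v ∈ P, if a ∈ edge (v p) then 1 else 0 := by
        simp only [hP.card_layer, card_filter]
    _ = ∑ v ∈ P, ∑ a, if a ∈ edge (v p) then 1 else 0 := sum_comm
    _ = 2 * #P := by simp [hedge, mul_comm]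

theorem IsCubePacking.card_layerHoles (hP : IsCubePacking P) :
    #(layerHoles P p a) = (2 ^ n - #(layer P p a)) * 2 ^ n := by
  rw [layerHoles_eq_holes_layer, (isCubePacking_layer hP).card_holes]

theorem IsCubePacking.sum_sub_card_layer (hP : IsCubePacking P) {k : ℕ}
    (hcard : #P + k = 2 ^ (n + 1)) : ∑ a, (2 ^ n - #(layer P p a)) = 2 * k := by
  rw [sum_tsub_distrib _ fun a _ => (isCubePacking_layer hP).card_le, hP.sum_card_layer]
  simp only [sum_const, card_univ, ZMod.card, smul_eq_mul]
  rw [pow_succ] at hcard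
  omega

/-- Otherwise the cubes covering the points at heights `a + 1` and `a - 1` of the line would both
contain the point at height `a + 2`. -/
theorem IsCubePacking.mem_layerHoles_sub_one (hP : IsCubePacking P) {y : Fin n → ZMod 4}
    (hy : y ∈ layerHoles P p a) (hy' : y ∉ layerHoles P p (a + 1)) :
    y ∈ layerHoles P p (a - 1) := by
  have hnext : ∀ a c : ZMod 4, a + 1 ∈ edge c → a ∉ edge c → a + 2 ∈ edge c := by decide
  have hprev : ∀ a c : ZMod 4, a - 1 ∈ edge c → a ∉ edge c → a + 2 ∈ edge c := by decide
  have hgap : ∀ a c : ZMod 4, a + 1 ∈ edge c → a - 1 ∈ edge c → False := by decide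
  simp only [mem_layerHoles, mem_holes, not_forall, not_not, insertNth_mem_cube_iff]
    at hy hy' ⊢
  obtain ⟨v, hv, hav, hyv⟩ := hy'
  intro w hw ⟨haw, hyw⟩
  have hav' : a ∉ edge (v p) := fun h => hy v hv ⟨h, hyv⟩
  have haw' : a ∉ edge (w p) := fun h => hy w hw ⟨h, hyw⟩
  have hvw := hP.eq_of_mem_cube hv hw (insertNth_mem_cube_iff.2 ⟨hnext a _ hav hav', hyv⟩)
    (insertNth_mem_cube_iff.2 ⟨hprev a _ haw haw', hyw⟩)
  exact hgap a (v p) hav (hvw ▸ haw)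

theorem IsCubePacking.layerHoles_subset_union (hP : IsCubePacking P) :
    layerHoles P p a ⊆ layerHoles P p (a + 1) ∪ layerHoles P p (a - 1) := fun y hy => by
  by_cases hy' : y ∈ layerHoles P p (a + 1)
  · exact mem_union_left _ hy'
  · exact mem_union_right _ (hP.mem_layerHoles_sub_one hy hy')

theorem insertNth_cubeFinset_subset_holes {u : Fin n → ZMod 4}
    (h₀ : cubeFinset u ⊆ layerHoles P p a) (h₁ : cubeFinset u ⊆ layerHoles P p (a + 1)) :
    cubeFinset (p.insertNth a u) ⊆ holes P := by
  intro x hx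
  rw [mem_cubeFinset, ← p.insertNth_self_removeNth x, insertNth_mem_cube_iff,
    Fin.insertNth_apply_same, Fin.removeNth_insertNth, mem_edge] at hx
  obtain ⟨hxp, hy⟩ := hx
  refine (removeNth_mem_layerHoles_iff (p := p)).1 ?_
  rcases hxp with hxp | hxp <;> rw [hxp]
  exacts [h₀ (mem_cubeFinset.2 hy), h₁ (mem_cubeFinset.2 hy)]

theorem IsCubePacking.layerHoles_eq_empty_iff (hP : IsCubePacking P) :
    layerHoles P p a = ∅ ↔ 2 ^ n - #(layer P p a) = 0 := by
  rw [← card_eq_zero, hP.card_layerHoles, mul_eq_zero, or_iff_left (Nat.two_pow_pos n).ne']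

theorem HolesContainCube.exists_cubeFinset_subset_holes_of_layerHoles_eq_empty
    (ih : HolesContainCube n) (hP : IsCubePacking P) {k : ℕ} (hcard : #P + k = 2 ^ (n + 1))
    (hk₁ : 1 ≤ k) (hk₂ : k ≤ 2) (hz : ∃ z, layerHoles P p z = ∅) :
    ∃ w, cubeFinset w ⊆ holes P := by
  set d := fun a => 2 ^ n - #(layer P p a) with hd
  have hsum : ∑ a, d a = 2 * k := hP.sum_sub_card_layer hcard
  have hempty : ∀ a, layerHoles P p a = ∅ ↔ d a = 0 := fun a => hP.layerHoles_eq_empty_iff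
  obtain ⟨y, hy, hy₁⟩ : ∃ y, layerHoles P p y ≠ ∅ ∧ layerHoles P p (y + 1) = ∅ := by
    have hne : ∃ a, layerHoles P p a ≠ ∅ := by
      by_contra! hall
      simp [(hempty _).1 (hall _)] at hsum
      omega
    simpa only [ne_eq, not_not] using
      ZMod.exists_and_not_add_one hne (hz.imp fun _ h => not_not.2 h)
  have hsub : layerHoles P p y ⊆ layerHoles P p (y - 1) := fun x hx =>
    hP.mem_layerHoles_sub_one hx (hy₁ ▸ notMem_empty x)
  have hdy : 0 < d y := Nat.pos_of_ne_zero ((hempty y).not.1 hy)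
  have hle : d y ≤ d (y - 1) := by
    have := card_le_card hsub
    rw [hP.card_layerHoles, hP.card_layerHoles] at this
    exact Nat.le_of_mul_le_mul_right this (Nat.two_pow_pos n)
  have hpair : d y + d (y - 1) ≤ 2 * k :=
    hsum ▸ add_le_sum (fun _ _ => Nat.zero_le _) (mem_univ _) (mem_univ _)
      (by simp; decide : y - 1 ≠ y).symm
  have hlayer := isCubePacking_layer hP (p := p) (a := y)
  obtain ⟨u, hu⟩ := ih (layer P p y) (d y) hlayer
    (by have := hlayer.card_le; simp only [hd]; omega) hdy (by omega)
  rw [← layerHoles_eq_holes_layer] at hu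
  exact ⟨p.insertNth (y - 1) u,
    insertNth_cubeFinset_subset_holes (hu.trans hsub) (by rwa [sub_add_cancel])⟩

theorem HolesContainCube.exists_layerHoles_eq_cubeFinset (ih : HolesContainCube n)
    (hP : IsCubePacking P) {k : ℕ} (hcard : #P + k = 2 ^ (n + 1)) (hk₂ : k ≤ 2)
    (hW : ∀ a, layerHoles P p a ≠ ∅) :
    ∃ u : ZMod 4 → Fin n → ZMod 4, ∀ a, layerHoles P p a = cubeFinset (u a) := by
  have hpos : ∀ a, 1 ≤ 2 ^ n - #(layer P p a) := fun a =>
    Nat.one_le_iff_ne_zero.2 (hP.layerHoles_eq_empty_iff.not.1 (hW a))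
  have hone : ∀ a, 2 ^ n - #(layer P p a) = 1 := by
    have hsum := hP.sum_sub_card_layer (p := p) hcard
    have hge := sum_le_sum fun a (_ : a ∈ univ) => hpos a
    refine fun a => ((sum_eq_sum_iff_of_le fun a _ => hpos a).1 ?_ a (mem_univ a)).symm
    simp only [sum_const, card_univ, ZMod.card, smul_eq_mul, mul_one] at hge ⊢
    omega
  choose u hu using fun a => ih (layer P p a) 1 (isCubePacking_layer hP)
    (by have := (isCubePacking_layer hP (p := p) (a := a)).card_le; have := hone a; omega)
    le_rfl one_le_two
  refine ⟨u, fun a => (eq_of_subset_of_card_le (layerHoles_eq_holes_layer ▸ hu a) ?_).symm⟩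
  rw [hP.card_layerHoles, hone, one_mul, card_cubeFinset]

theorem IsCubePacking.card_layerHoles_inter_add_one (hP : IsCubePacking P)
    {u : ZMod 4 → Fin n → ZMod 4} (hu : ∀ a, layerHoles P p a = cubeFinset (u a))
    (hne : ∀ a, u a ≠ u (a + 1)) (b : ZMod 4) :
    #(layerHoles P p b ∩ layerHoles P p (b + 1)) * 2 = 2 ^ n ∧
      layerHoles P p b ∩ layerHoles P p (b + 1) ∩ layerHoles P p (b - 1) = ∅ := by
  have hcard : ∀ a, #(layerHoles P p a) = 2 ^ n := fun a => by rw [hu, card_cubeFinset]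
  rw [← hcard b]
  refine card_inter_mul_two_eq_of_subset_union hP.layerHoles_subset_union ?_ ?_
  · rw [hcard, hu, hu]
    exact card_cubeFinset_inter_mul_two_le (hne b)
  · rw [hcard, hu, hu, inter_comm]
    exact card_cubeFinset_inter_mul_two_le (by simpa using hne (b - 1))

theorem IsCubePacking.layerHoles_inter_add_two (hP : IsCubePacking P)
    {u : ZMod 4 → Fin n → ZMod 4} (hu : ∀ a, layerHoles P p a = cubeFinset (u a))
    (hne : ∀ a, u a ≠ u (a + 1)) (b : ZMod 4) :
    layerHoles P p b ∩ layerHoles P p (b + 2) = ∅ := by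
  have htriple := fun a => (hP.card_layerHoles_inter_add_one hu hne a).2
  refine eq_empty_of_forall_notMem fun y hy => ?_
  obtain ⟨hb, hb₂⟩ := mem_inter.1 hy
  rcases mem_union.1 (hP.layerHoles_subset_union hb) with hb₁ | hb₁
  · have := htriple (b + 1)
    rw [add_assoc, one_add_one_eq_two, add_sub_cancel_right] at this
    exact notMem_empty y (this ▸ mem_inter.2 ⟨mem_inter.2 ⟨hb₁, hb₂⟩, hb⟩)
  · have := htriple (b - 1)
    rw [sub_add_cancel, show b - 1 - 1 = b + 2 by grind] at this
    exact notMem_empty y (this ▸ mem_inter.2 ⟨mem_inter.2 ⟨hb₁, hb⟩, hb₂⟩)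

/-- Each layer of holes lies in the union of its two neighbours, which it meets in at most half
its points each; so consecutive base points differ in a single coordinate, and base points two
apart, whose cubes are disjoint, differ by `2` in some coordinate. This forces the coordinate in
which consecutive base points differ to be the same at every step. -/
theorem IsCubePacking.exists_forall_ne_eq_of_layerHoles_eq (hP : IsCubePacking P)
    {u : ZMod 4 → Fin n → ZMod 4} (hu : ∀ a, layerHoles P p a = cubeFinset (u a))
    (hne : ∀ a, u a ≠ u (a + 1)) : ∃ i, ∀ a, ∀ k ≠ i, u a k = u 0 k := by
  have hhalf := fun b => (hP.card_layerHoles_inter_add_one hu hne b).1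
  simp only [hu] at hhalf
  have hnear : ∀ b k, u (b + 1) k ≠ u b k + 2 := fun b k hk => by
    have hdisj := disjoint_cubeFinset_iff.2 ⟨k, hk⟩
    have := hhalf b
    rw [disjoint_iff_inter_eq_empty.1 hdisj, card_empty] at this
    exact (Nat.two_pow_pos n).ne (by omega)
  have hfar : ∀ b, ∃ k, u (b + 2) k = u b k + 2 := fun b => by
    rw [← disjoint_cubeFinset_iff, disjoint_iff_inter_eq_empty, ← hu, ← hu]
    exact hP.layerHoles_inter_add_two hu hne b
  choose i hi using fun b => exists_forall_ne_eq_of_two_pow_le_card_inter (hne b) (hhalf b).ge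
  have hi_succ : ∀ b, i (b + 1) = i b := fun b => by
    by_contra hib
    obtain ⟨k, hk⟩ := hfar b
    have h₂ : u (b + 2) = u (b + 1 + 1) := by rw [add_assoc, one_add_one_eq_two]
    by_cases hkb : k = i b
    · subst hkb
      rw [h₂, hi (b + 1) _ (Ne.symm hib)] at hk
      exact hnear b _ hk
    · rw [h₂, ← hi b k hkb] at hk
      exact hnear (b + 1) k hk
  refine ⟨i 0, fun a k hk => ZMod.apply_eq_of_forall_add_one (f := fun a => u a k)
    (fun b => hi b k ?_) a 0⟩
  rwa [ZMod.apply_eq_of_forall_add_one hi_succ b 0]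

theorem IsCubePacking.exists_layerHoles_eq_empty (hP : IsCubePacking P) (hPne : P.Nonempty)
    {u : ZMod 4 → Fin n → ZMod 4} (hu : ∀ a, layerHoles P p a = cubeFinset (u a))
    (hne : ∀ a, u a ≠ u (a + 1)) : ∃ q z, layerHoles P q z = ∅ := by
  obtain ⟨i, hi⟩ := hP.exists_forall_ne_eq_of_layerHoles_eq hu hne
  by_cases hj : ∀ j, j = i
  · -- a single coordinate: a cube `v ∈ P` cannot avoid the holes of both its layers
    obtain ⟨v, hv⟩ := hPne
    have hfar : ∀ a ∈ edge (v p), ∃ k, u a k = p.removeNth v k + 2 := fun a ha => by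
      rw [← disjoint_cubeFinset_iff, ← hu, disjoint_left]
      intro y hyv hy
      exact mem_holes.1 (mem_layerHoles.1 hy) v hv
        (insertNth_mem_cube_iff.2 ⟨ha, mem_cubeFinset.1 hyv⟩)
    obtain ⟨k, hk⟩ := hfar (v p) (mem_edge.2 (Or.inl rfl))
    obtain ⟨k', hk'⟩ := hfar (v p + 1) (mem_edge.2 (Or.inr rfl))
    refine (hne (v p) (funext fun l => ?_)).elim
    rw [hj l, ← hj k, hk, hj k, ← hj k', hk']
  · -- all holes lie in the slab `x (p.succAbove j) ∈ edge (u 0 j)`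
    obtain ⟨j, hj⟩ := not_forall.1 hj
    refine ⟨p.succAbove j, u 0 j + 2, eq_empty_of_forall_notMem fun y hy => ?_⟩
    have hx := (removeNth_mem_layerHoles_iff (p := p)).2 (mem_layerHoles.1 hy)
    rw [hu, mem_cubeFinset, mem_cube_iff] at hx
    have hxj := hx j
    rw [hi _ j hj, Fin.removeNth_apply, Fin.insertNth_apply_same] at hxj
    exact (by decide : ∀ c : ZMod 4, c + 2 ∉ edge c) _ hxj

end Layers

theorem holesContainCube (n : ℕ) : HolesContainCube n := by
  induction n with
  | zero =>
    intro P k _ hcard hk₁ _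
    obtain rfl : P = ∅ := card_eq_zero.1 (by simp at hcard; omega)
    exact ⟨0, fun x _ => mem_holes.2 (by simp)⟩
  | succ n ih =>
    intro P k hP hcard hk₁ hk₂
    obtain rfl | hPne := P.eq_empty_or_nonempty
    · exact ⟨0, fun x _ => mem_holes.2 (by simp)⟩
    by_cases hfull : ∃ z, layerHoles P 0 z = ∅
    · exact ih.exists_cubeFinset_subset_holes_of_layerHoles_eq_empty hP hcard hk₁ hk₂ hfull
    obtain ⟨u, hu⟩ := ih.exists_layerHoles_eq_cubeFinset hP hcard hk₂ (not_exists.1 hfull)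
    by_cases hstep : ∃ a, u a = u (a + 1)
    · obtain ⟨a, ha⟩ := hstep
      exact ⟨Fin.insertNth 0 a (u a),
        insertNth_cubeFinset_subset_holes (hu a).ge (by rw [hu, ← ha])⟩
    obtain ⟨q, hq⟩ := hP.exists_layerHoles_eq_empty hPne hu (not_exists.1 hstep)
    exact ih.exists_cubeFinset_subset_holes_of_layerHoles_eq_empty hP hcard hk₁ hk₂ hq

theorem packing_card_sub_two_extensible {n : ℕ} (P : Finset (Fin n → ZMod 4))
    (hP : (P : Set (Fin n → ZMod 4)).Pairwise fun v w => Disjoint (cube v) (cube w))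
    (hcard : P.card + 2 = 2 ^ n) :
    ∃ w : Fin n → ZMod 4, ∀ v ∈ P, Disjoint (cube v) (cube w) := by
  obtain ⟨w, hw⟩ := holesContainCube n P 2 hP hcard one_le_two le_rfl
  exact ⟨w, fun v hv => Set.disjoint_right.2 fun x hxw =>
    mem_holes.1 (hw (mem_cubeFinset.2 hxw)) v hv⟩
end

section
/- h(2) = 3: there exist 3 cubes in the discrete torus (ℤ/4ℤ)^2 (possibly overlapping) such that every cube of the torus meets one of them, and no 2 cubes have this property. -/
/-- A blocking set: a family of cubes meeting every cube of the torus. -/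
def IsBlocking {n : ℕ} (B : Finset (Fin n → ZMod 4)) : Prop :=
  ∀ w : Fin n → ZMod 4, ∃ v ∈ B, ¬ Disjoint (cube v) (cube w)

/-!
Two cubes are disjoint exactly when some coordinate of their base points differs by `2`.
A family of at most `n` cubes therefore misses the cube whose `i`-th coordinate is `2` more
than that of the `i`-th member of the family, so `h(n) > n`. Conversely the three diagonal
cubes at `0`, `1`, `2` block in dimension `2`: a base point `w` excludes only the two
diagonal values `w 0 - 2` and `w 1 - 2`.
-/

lemma ZMod.exists_mem_pair_inter_iff (a b : ZMod 4) :
    (∃ x, (x = a ∨ x = a + 1) ∧ (x = b ∨ x = b + 1)) ↔ b - a ≠ 2 := by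
  revert a b
  decide

lemma disjoint_cube_iff {n : ℕ} (v w : Fin n → ZMod 4) :
    Disjoint (cube v) (cube w) ↔ ∃ i, w i - v i = 2 := by
  rw [← not_iff_not, Set.not_disjoint_iff, not_exists]
  simp only [cube, Set.mem_ofPred_eq, ← forall_and, ← ZMod.exists_mem_pair_inter_iff]
  rw [Classical.skolem]

lemma IsBlocking.lt_card {n : ℕ} {B : Finset (Fin n → ZMod 4)} (hB : IsBlocking B) :
    n < B.card := by
  by_contra! hle
  obtain ⟨w₀, hw₀, -⟩ := hB 0
  have : Nonempty B := ⟨⟨w₀, hw₀⟩⟩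
  obtain ⟨g⟩ : Nonempty (B ↪ Fin n) :=
    Function.Embedding.nonempty_of_card_le (by simpa using hle)
  obtain ⟨v, hv, hmeet⟩ := hB fun i => ((Function.invFun g i : B) : Fin n → ZMod 4) i + 2
  refine hmeet ((disjoint_cube_iff _ _).2 ⟨g ⟨v, hv⟩, ?_⟩)
  rw [Function.leftInverse_invFun g.injective]
  ring

lemma isBlocking_diagonal :
    IsBlocking ({![0, 0], ![1, 1], ![2, 2]} : Finset (Fin 2 → ZMod 4)) := by
  unfold IsBlocking
  simp only [disjoint_cube_iff]
  decide

theorem h_two_eq_three :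
    (∃ B : Finset (Fin 2 → ZMod 4), B.card = 3 ∧ IsBlocking B) ∧
    (∀ B : Finset (Fin 2 → ZMod 4), IsBlocking B → 3 ≤ B.card) :=
  ⟨⟨_, by decide, isBlocking_diagonal⟩, fun _ hB => hB.lt_card⟩
end

section
/- Keller's conjecture holds for tilings of class T_2 in dimension 3: in every cube tiling of the discrete torus (ℤ/4ℤ)^3 by 8 pairwise disjoint cubes, there exist two cubes whose position vectors differ by 2 in exactly one coordinate and agree in all other coordinates. -/
theorem ZMod.exists_eq_or_eq_add_one_of_sub_ne_two :
    ∀ a b : ZMod 4, a - b ≠ 2 → ∃ c : ZMod 4, (c = a ∨ c = a + 1) ∧ (c = b ∨ c = b + 1) := by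
  decide

theorem exists_sub_eq_two_of_disjoint_cube {n : ℕ} {v w : Fin n → ZMod 4}
    (h : Disjoint (cube v) (cube w)) : ∃ i, v i - w i = 2 := by
  by_contra! hne
  choose x hxv hxw using fun i => ZMod.exists_eq_or_eq_add_one_of_sub_ne_two (v i) (w i) (hne i)
  exact Set.disjoint_left.mp h hxv hxw

@[simps]
def kellerGraph (n : ℕ) : SimpleGraph (Fin n → ZMod 4) where
  Adj v w := (∃ i, v i - w i = 2) ∧ ∃ i j, i ≠ j ∧ v i ≠ w i ∧ v j ≠ w j
  symm := ⟨by
    rintro v w ⟨⟨i, hi⟩, j, k, hjk, hj, hk⟩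
    exact ⟨⟨i, by rw [← neg_sub, hi]; decide⟩, j, k, hjk, Ne.symm hj, Ne.symm hk⟩⟩
  loopless := ⟨by
    rintro v ⟨⟨i, hi⟩, -⟩
    rw [sub_self] at hi
    exact absurd hi (by decide)⟩

instance (n : ℕ) : DecidableRel (kellerGraph n).Adj := fun v w => by
  unfold kellerGraph; infer_instance

theorem isClique_kellerGraph_of_pairwise_disjoint {n : ℕ} {P : Set (Fin n → ZMod 4)}
    (hP : P.Pairwise fun v w => Disjoint (cube v) (cube w))
    (htwin : ∀ v ∈ P, ∀ w ∈ P, ∀ i, v i - w i = 2 → ∃ j ≠ i, v j ≠ w j) :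
    (kellerGraph n).IsClique P := by
  intro v hv w hw hvw
  obtain ⟨i, hi⟩ := exists_sub_eq_two_of_disjoint_cube (hP hv hw hvw)
  obtain ⟨j, hji, hj⟩ := htwin v hv w hw i hi
  rw [kellerGraph_adj]
  refine ⟨⟨i, hi⟩, i, j, hji.symm, fun h => ?_, hj⟩
  rw [h, sub_self] at hi
  exact absurd hi (by decide)

namespace List

variable {α : Type*} (r : α → α → Bool)

def hasClique : ℕ → List α → Bool
  | 0, _ => true
  | k + 1, l => l.tails.any fun
      | [] => false
      | c :: rest => hasClique k (rest.filter (r c))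

theorem hasClique_succ_cons (k : ℕ) (c : α) (l : List α) :
    hasClique r (k + 1) (c :: l) = (hasClique r k (l.filter (r c)) || hasClique r (k + 1) l) := by
  simp [hasClique]

theorem hasClique_of_sublist {s l : List α} (hsl : s <+ l) (hs : s.Pairwise (r · ·)) :
    hasClique r s.length l := by
  induction s generalizing l with
  | nil => simp only [length_nil, hasClique]
  | cons c s ih =>
    obtain ⟨hcs, hs⟩ := pairwise_cons.mp hs
    induction l with
    | nil => exact absurd hsl (by simp)
    | cons a l ihl =>
      rw [length_cons, hasClique_succ_cons, Bool.or_eq_true]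
      rcases sublist_cons_iff.mp hsl with h | ⟨s', hs', h⟩
      · exact Or.inr (ihl h)
      · obtain ⟨rfl, rfl⟩ := cons.inj hs'
        refine Or.inl (ih ?_ hs)
        rw [← filter_eq_self.mpr hcs]
        exact h.filter _

end List

def torusPoints : List (Fin 3 → ZMod 4) := do
  let a ← List.finRange 4
  let b ← List.finRange 4
  let c ← List.finRange 4
  pure ![a, b, c]

theorem mem_torusPoints (v : Fin 3 → ZMod 4) : v ∈ torusPoints := by
  have hv : v = ![v 0, v 1, v 2] := by
    funext i; fin_cases i <;> rfl
  simp only [torusPoints, List.pure_def, List.bind_eq_flatMap, List.mem_flatMap, List.mem_finRange,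
    List.mem_cons, List.not_mem_nil, or_false, true_and]
  exact ⟨_, _, _, hv⟩

theorem nodup_torusPoints : torusPoints.Nodup := by
  decide +kernel

theorem hasClique_kellerGraph_three_eight :
    torusPoints.hasClique (fun v w => (kellerGraph 3).Adj v w) 8 = false := by
  decide +kernel

theorem kellerGraph_three_cliqueFree : (kellerGraph 3).CliqueFree 8 := by
  intro t ht
  set s := torusPoints.filter (· ∈ t)
  have hs_nodup : s.Nodup := nodup_torusPoints.filter _
  have hs_length : s.length = 8 := by
    rw [← List.toFinset_card_of_nodup hs_nodup, ← ht.card_eq]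
    congr 1
    ext v
    simp [s, mem_torusPoints]
  have hs_clique : s.Pairwise fun v w => decide ((kellerGraph 3).Adj v w) = true :=
    hs_nodup.pairwise_of_forall_ne fun v hv w hw hvw => by
      simp only [s, List.mem_filter, decide_eq_true_eq] at hv hw ⊢
      exact ht.isClique hv.2 hw.2 hvw
  have h := List.hasClique_of_sublist _ List.filter_sublist hs_clique
  rw [hs_length, hasClique_kellerGraph_three_eight] at h
  exact absurd h Bool.false_ne_true

theorem keller_dim3_general (P : Finset (Fin 3 → ZMod 4))
    (hcard : P.card = 8)
    (hP : (P : Set (Fin 3 → ZMod 4)).Pairwise fun v w => Disjoint (cube v) (cube w)) :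
    ∃ v ∈ P, ∃ w ∈ P, ∃ i, v i - w i = 2 ∧ ∀ j, j ≠ i → v j = w j := by
  by_contra! htwin
  exact kellerGraph_three_cliqueFree P ⟨isClique_kellerGraph_of_pairwise_disjoint hP htwin, hcard⟩

theorem keller_dim3 (P : Finset (Fin 3 → ZMod 4))
    (hcard : P.card = 8)
    (hP : (P : Set (Fin 3 → ZMod 4)).Pairwise fun v w => Disjoint (cube v) (cube w))
    (hcover : (⋃ v ∈ P, cube v) = Set.univ) :
    ∃ v ∈ P, ∃ w ∈ P, ∃ i, v i - w i = 2 ∧ ∀ j, j ≠ i → v j = w j :=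
  keller_dim3_general P hcard hP
end
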